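/- arXiv:1810.09342 — 2 statements merged into one kernel-verified Lean document; each statement's English description precedes it below -/
import Mathlib

section
/- Let X be a finite nonempty set and F : X → ℝ an objective function. For each temperature T > 0 let A(T) = (a_{ij}(T)) be a row-stochastic generation matrix indexed by X, define the acceptance probability ℙ_{ij}(T) = 1 if F(x_j) < F(x_i) and ℙ_{ij}(T) = exp(−(F(x_j) − F(x_i))/T) otherwise, and define the transition matrix M(T) by m_{ij}(T) = a_{ij}(T)·ℙ_{ij}(T) for i ≠ j and m_{ii}(T) = 1 − Σ_{j≠i} m_{ij}(T). Assume: (a) for every T > 0, M(T) is irreducible (for all i, j there is k ≥ 1 with (M(T)^k)_{ij} > 0) and aperiodic, and π_T is a stationary probability distribution of M(T) (π_T M(T) = π_T); (b) the limit π* = lim_{T→0+} π_T exists; (i) there exists δ > 0 such that for all T > 0 and all i ≠ j, a_{ij}(T) > 0 implies a_{ij}(T) ≥ δ; (ii) the edge set E = {(i,j) : i ≠ j, a_{ij}(T) > 0} of the neighborhood graph G = (X, E) does not depend on T; (iii) G is weakly reversible, i.e. for every real number F̃ and every pair of states x, y ∈ X, there exists a directed path (x, v₁, …, v_m, y) in G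 with F(v_k) ≤ F̃ for all k = 1, …, m if and only if there exists such a directed path from y to x. Then for every x ∈ X, π*(x) > 0 if and only if F(x) = min_{y ∈ X} F(y). -/
/-!
Weak reversibility at a level below `min F` only concerns paths without intermediate vertices,
so it says that `E` is symmetric.

By the Markov chain tree theorem, `π_T x` is proportional to the total weight of the spanning
arborescences directed towards `x`. An arborescence rooted at `y` without zero-weight edges uses
only edges of `E`; reversing its path from `z` to `y` gives one rooted at `z` whose Metropolis
cost `∑ v, (F (f v) - F v)⁺` has changed by exactly `F z - F y`. The weight of an arborescence
in `E` lies between `δ ^ (|X| - 1) * exp (-cost / T)` and `exp (-cost / T)`, hence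
`π_T z ≥ c * exp ((F y - F z) / T) * π_T y` with `c > 0` independent of `T`. As `T → 0`, a
non-minimum `x` gets `π_T x ≤ c⁻¹ * exp (-(F x - min F) / T) → 0`, while a minimum keeps
`π_T x ≥ c / |X|`.
-/

open Filter Topology

/-- There is a directed path in the graph with edge set `E` from `x` to `y`
whose intermediate vertices `v` (the entries of `l`) all satisfy `F v ≤ Ftil`. -/
def ExistsPathBelow {X : Type*} (E : Set (X × X)) (F : X → ℝ) (Ftil : ℝ)
    (x y : X) : Prop :=
  ∃ l : List X, List.Chain (fun a b => (a, b) ∈ E) x (l ++ [y]) ∧ ∀ v ∈ l, F v ≤ Ftil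

lemma existsPathBelow_iff_mem {X : Type*} {E : Set (X × X)} {F : X → ℝ} {Ftil : ℝ}
    (hF : ∀ v, Ftil < F v) {x y : X} : ExistsPathBelow E F Ftil x y ↔ (x, y) ∈ E := by
  constructor
  · rintro ⟨_ | ⟨v, l⟩, hl, hlF⟩
    · exact List.isChain_pair.1 hl
    · exact absurd (hlF v List.mem_cons_self) (hF v).not_ge
  · exact fun h => ⟨[], List.isChain_pair.2 h, by simp⟩

open Finset Function Matrix

noncomputable section

section Maps

variable {α : Type*}

lemma iterate_eq_of_forall_lt_notMem {f g : α → α} {s : Set α} (hfg : ∀ v ∉ s, g v = f v)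
    {z : α} {n : ℕ} (hn : ∀ j < n, f^[j] z ∉ s) : g^[n] z = f^[n] z := by
  induction n with
  | zero => rfl
  | succ n ih =>
    rw [iterate_succ_apply', iterate_succ_apply', ih fun j hj => hn j (by omega),
      hfg _ (hn n n.lt_succ_self)]

/-- The predecessor of `y` on its cycle; meaningful only when `y` is a periodic point. -/
def cyclePred (h : α → α) (y : α) : α := h^[minimalPeriod h y - 1] y

lemma apply_cyclePred {h : α → α} {y : α} (hy : y ∈ periodicPts h) :
    h (cyclePred h y) = y := by
  rw [cyclePred, ← iterate_succ_apply' h, Nat.succ_eq_add_one,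
    Nat.sub_add_cancel (minimalPeriod_pos_of_mem_periodicPts hy), iterate_minimalPeriod]

lemma mem_periodicPts_of_forall_exists_iterate_eq {h : α → α} {y : α}
    (hy : ∀ v, ∃ k, h^[k] v = y) : y ∈ periodicPts h := by
  obtain ⟨k, hk⟩ := hy (h y)
  exact ⟨k + 1, k.succ_pos, by rwa [IsPeriodicPt, IsFixedPt, iterate_succ_apply]⟩

lemma exists_iterate_eq_cyclePred {h : α → α} {y : α} (hy : ∀ v, ∃ k, h^[k] v = y) (v : α) :
    ∃ k, h^[k] v = cyclePred h y := by
  obtain ⟨k, hk⟩ := hy v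
  exact ⟨minimalPeriod h y - 1 + k, by rw [iterate_add_apply, hk, cyclePred]⟩

variable [DecidableEq α]

lemma exists_iterate_update_eq {f : α → α} {c : α}
    (hf : ∀ v, ∃ k, f^[k] v = c) (a v : α) : ∃ k, (update f c a)^[k] v = c := by
  obtain ⟨k, hk⟩ := hf v
  induction k generalizing v with
  | zero => exact ⟨0, hk⟩
  | succ k ih =>
    by_cases hvc : v = c
    · exact ⟨0, hvc⟩
    · obtain ⟨t, ht⟩ := ih (f v) (by rwa [iterate_succ_apply] at hk)
      exact ⟨t + 1, by rw [iterate_succ_apply, update_of_ne hvc, ht]⟩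

/-- Turn the edge `u → y` of an arborescence rooted at `y` around, making `u` the root. -/
def reroot (f : α → α) (y u : α) : α → α :=
  update (update f y u) u u

lemma reroot_apply_of_ne {f : α → α} {y u v : α} (hvu : v ≠ u) (hvy : v ≠ y) :
    reroot f y u v = f v := by
  rw [reroot, update_of_ne hvu, update_of_ne hvy]

lemma reroot_apply_mem {f : α → α} {y u : α} {E : Set (α × α)}
    (hE : ∀ a b, (a, b) ∈ E → (b, a) ∈ E) (hfE : ∀ v ≠ y, (v, f v) ∈ E) (huy : u ≠ y)
    (hfu : f u = y) :
    ∀ v ≠ u, (v, reroot f y u v) ∈ E := by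
  intro v hvu
  by_cases hvy : v = y
  · subst hvy
    rw [reroot, update_of_ne hvu, update_self]
    exact hE _ _ (hfu ▸ hfE u huy)
  · rw [reroot_apply_of_ne hvu hvy]
    exact hfE v hvy

end Maps

variable {X : Type*} [Fintype X]

section Arborescences

variable [DecidableEq X]

open Classical in
/-- Spanning arborescences directed towards the root `r`, encoded by their parent maps. -/
def arborescences (r : X) : Finset (X → X) :=
  {f | f r = r ∧ ∀ v, ∃ k, f^[k] v = r}

open Classical in
/-- Maps whose functional graph is connected with `y` on its (nontrivial) cycle. -/
def unicyclicMaps (y : X) : Finset (X → X) :=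
  {h | h y ≠ y ∧ ∀ v, ∃ k, h^[k] v = y}

def arborescenceWeight (m : Matrix X X ℝ) (r : X) (f : X → X) : ℝ :=
  ∏ v ∈ univ.erase r, m v (f v)

def treeWeight (m : Matrix X X ℝ) (r : X) : ℝ :=
  ∑ f ∈ arborescences r, arborescenceWeight m r f

variable {r y : X} {f h : X → X}

lemma mem_arborescences : f ∈ arborescences r ↔ f r = r ∧ ∀ v, ∃ k, f^[k] v = r := by
  simp [arborescences]

lemma mem_unicyclicMaps : h ∈ unicyclicMaps y ↔ h y ≠ y ∧ ∀ v, ∃ k, h^[k] v = y := by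
  simp [unicyclicMaps]

lemma apply_ne_self_of_mem_arborescences (hf : f ∈ arborescences r) {v : X} (hv : v ≠ r) :
    f v ≠ v := fun hfix => by
  obtain ⟨k, hk⟩ := (mem_arborescences.1 hf).2 v
  exact hv (by rwa [iterate_fixed hfix] at hk)

lemma eq_of_mem_arborescences_of_isPeriodicPt (hf : f ∈ arborescences r) {n : ℕ} (hn : 0 < n)
    (hy : IsPeriodicPt f n y) : y = r := by
  obtain ⟨hfr, hreach⟩ := mem_arborescences.1 hf
  obtain ⟨k, hk⟩ := hreach y
  calc y = f^[n * k - k + k] y := by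
        rw [Nat.sub_add_cancel (Nat.le_mul_of_pos_left k hn)]; exact (hy.mul_const k).eq.symm
    _ = r := by rw [iterate_add_apply, hk, iterate_fixed hfr]

lemma update_mem_arborescences (hh : ∀ v, ∃ k, h^[k] v = y) : update h y y ∈ arborescences y :=
  mem_arborescences.2 ⟨update_self .., exists_iterate_update_eq hh y⟩

lemma update_mem_unicyclicMaps_of_root_ne {i : X} (hf : f ∈ arborescences i) (hiy : i ≠ y) :
    update f i y ∈ unicyclicMaps y := by
  refine mem_unicyclicMaps.2
    ⟨by rw [update_of_ne hiy.symm]; exact apply_ne_self_of_mem_arborescences hf hiy.symm,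
      fun v => ?_⟩
  obtain ⟨k, hk⟩ := exists_iterate_update_eq (mem_arborescences.1 hf).2 y v
  exact ⟨k + 1, by rw [iterate_succ_apply', hk, update_self]⟩

lemma update_mem_unicyclicMaps_of_value_ne (hf : f ∈ arborescences y) {j : X} (hjy : j ≠ y) :
    update f y j ∈ unicyclicMaps y :=
  mem_unicyclicMaps.2
    ⟨by rwa [update_self], exists_iterate_update_eq (mem_arborescences.1 hf).2 j⟩

lemma cyclePred_update (hf : f ∈ arborescences r) (hry : r ≠ y) :
    cyclePred (update f r y) y = r := by
  set h := update f r y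
  have hreach : ∃ t, f^[t] y = r := (mem_arborescences.1 hf).2 y
  set t := Nat.find hreach
  have hagree : ∀ s ≤ t, h^[s] y = f^[s] y := fun s hs =>
    iterate_eq_of_forall_lt_notMem (s := {r}) (fun v hv => update_of_ne hv _ _)
      fun j hj => Nat.find_min hreach (by omega)
  have hper : IsPeriodicPt h (t + 1) y := by
    rw [IsPeriodicPt, IsFixedPt, iterate_succ_apply', hagree t le_rfl, Nat.find_spec hreach]
    exact update_self ..
  have hmin : minimalPeriod h y = t + 1 := by
    refine le_antisymm (hper.minimalPeriod_le t.succ_pos) (not_lt.1 fun hlt => hry ?_)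
    have hf_per : IsPeriodicPt f (minimalPeriod h y) y := by
      rw [IsPeriodicPt, IsFixedPt, ← hagree _ (by omega)]
      exact iterate_minimalPeriod
    exact (eq_of_mem_arborescences_of_isPeriodicPt hf
      (hper.minimalPeriod_pos t.succ_pos) hf_per).symm
  rw [cyclePred, hmin, Nat.add_sub_cancel, hagree t le_rfl, Nat.find_spec hreach]

lemma prod_update_eq_arborescenceWeight_mul (m : Matrix X X ℝ) (f : X → X) (r a : X) :
    ∏ v, m v (update f r a v) = arborescenceWeight m r f * m r a := by
  rw [← mul_prod_erase univ _ (mem_univ r), update_self, arborescenceWeight, mul_comm]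
  exact congrArg (· * _) (prod_congr rfl fun v hv => by rw [update_of_ne (ne_of_mem_erase hv)])

lemma sum_treeWeight_mul_eq_sum_unicyclicMaps (m : Matrix X X ℝ) (y : X) :
    ∑ i ∈ univ.erase y, treeWeight m i * m i y = ∑ h ∈ unicyclicMaps y, ∏ v, m v (h v) := by
  simp_rw [treeWeight, sum_mul]
  rw [sum_sigma']
  refine sum_nbij' (fun p => update p.2 p.1 y)
    (fun h => ⟨cyclePred h y, update h (cyclePred h y) (cyclePred h y)⟩) ?_ ?_ ?_ ?_ ?_
  · rintro ⟨i, f⟩ hp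
    simp only [mem_sigma, mem_erase, mem_univ, and_true] at hp
    exact update_mem_unicyclicMaps_of_root_ne hp.2 hp.1
  · intro h hh
    obtain ⟨hhy, hreach⟩ := mem_unicyclicMaps.1 hh
    have hcy := apply_cyclePred (mem_periodicPts_of_forall_exists_iterate_eq hreach)
    simp only [mem_sigma, mem_erase, mem_univ, and_true]
    exact ⟨fun hc => hhy (by rwa [hc] at hcy),
      update_mem_arborescences (exists_iterate_eq_cyclePred hreach)⟩
  · rintro ⟨i, f⟩ hp
    simp only [mem_sigma, mem_erase, mem_univ, and_true] at hp
    have hfi : update f i i = f := update_eq_self_iff.2 (mem_arborescences.1 hp.2).1.symm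
    simp only [cyclePred_update hp.2 hp.1, update_idem, hfi]
  · intro h hh
    have hcy := apply_cyclePred
      (mem_periodicPts_of_forall_exists_iterate_eq (mem_unicyclicMaps.1 hh).2)
    have hhc : update h (cyclePred h y) y = h := update_eq_self_iff.2 hcy.symm
    simp only [update_idem, hhc]
  · rintro ⟨i, f⟩ _
    exact (prod_update_eq_arborescenceWeight_mul m f i y).symm

lemma treeWeight_mul_sum_eq_sum_unicyclicMaps (m : Matrix X X ℝ) (y : X) :
    treeWeight m y * ∑ j ∈ univ.erase y, m y j = ∑ h ∈ unicyclicMaps y, ∏ v, m v (h v) := by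
  rw [treeWeight, sum_mul_sum, ← sum_product']
  refine sum_nbij' (fun p => update p.1 y p.2) (fun h => (update h y y, h y)) ?_ ?_ ?_ ?_ ?_
  · rintro ⟨f, j⟩ hp
    simp only [mem_product, mem_erase, mem_univ, and_true] at hp
    exact update_mem_unicyclicMaps_of_value_ne hp.1 hp.2
  · intro h hh
    obtain ⟨hhy, hreach⟩ := mem_unicyclicMaps.1 hh
    simp only [mem_product, mem_erase, mem_univ, and_true]
    exact ⟨update_mem_arborescences hreach, hhy⟩
  · rintro ⟨f, j⟩ hp
    simp only [mem_product] at hp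
    have hfy : update f y y = f := update_eq_self_iff.2 (mem_arborescences.1 hp.1).1.symm
    simp [hfy]
  · intro h _
    simp
  · rintro ⟨f, j⟩ _
    exact (prod_update_eq_arborescenceWeight_mul m f y j).symm

/-- The Markov chain tree theorem. Both sides of the balance equation at `y` are sums over
`unicyclicMaps y`: cut the cycle at the edge entering `y`, or at the edge leaving `y`. -/
theorem treeWeight_vecMul (m : Matrix X X ℝ) (hm : ∀ i, ∑ j, m i j = 1) :
    treeWeight m ᵥ* m = treeWeight m := by
  ext y
  have hy : ∑ j ∈ univ.erase y, m y j = 1 - m y y := by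
    rw [← hm y, ← add_sum_erase _ _ (mem_univ y), add_sub_cancel_left]
  change ∑ i, treeWeight m i * m i y = _
  rw [← add_sum_erase _ _ (mem_univ y), sum_treeWeight_mul_eq_sum_unicyclicMaps,
    ← treeWeight_mul_sum_eq_sum_unicyclicMaps, hy]
  ring

lemma arborescenceWeight_nonneg {m : Matrix X X ℝ} (hm : ∀ i j, 0 ≤ m i j) (r : X) (f : X → X) :
    0 ≤ arborescenceWeight m r f :=
  prod_nonneg fun v _ => hm v (f v)

lemma arborescenceWeight_le_treeWeight {m : Matrix X X ℝ} (hm : ∀ i j, 0 ≤ m i j) {r : X}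
    {f : X → X} (hf : f ∈ arborescences r) : arborescenceWeight m r f ≤ treeWeight m r :=
  single_le_sum (fun g _ => arborescenceWeight_nonneg hm r g) hf

lemma treeWeight_nonneg {m : Matrix X X ℝ} (hm : ∀ i j, 0 ≤ m i j) (r : X) :
    0 ≤ treeWeight m r :=
  sum_nonneg fun f _ => arborescenceWeight_nonneg hm r f

/-- Each vertex steps to a neighbour from which `r` is reachable in fewer steps. -/
lemma exists_mem_arborescences_forall_pos {m : Matrix X X ℝ} (hm : ∀ i j, 0 ≤ m i j) {r : X}
    (hr : ∀ v, ∃ k, 0 < (m ^ k) v r) :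
    ∃ f ∈ arborescences r, ∀ v ≠ r, 0 < m v (f v) := by
  classical
  have hstep : ∀ v ≠ r, ∃ w, 0 < m v w ∧ Nat.find (hr w) < Nat.find (hr v) := by
    intro v hv
    obtain ⟨k, hk⟩ : ∃ k, Nat.find (hr v) = k + 1 := Nat.exists_eq_succ_of_ne_zero fun h0 => by
      have := Nat.find_spec (hr v)
      rw [h0, pow_zero, one_apply_ne hv] at this
      exact this.false
    have hpos := Nat.find_spec (hr v)
    rw [hk, pow_succ', mul_apply, sum_pos_iff_of_nonneg fun w _ =>
      mul_nonneg (hm v w) (pow_apply_nonneg hm k w r)] at hpos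
    obtain ⟨w, -, hw⟩ := hpos
    exact ⟨w, pos_of_mul_pos_left hw (pow_apply_nonneg hm k w r),
      hk ▸ Nat.lt_succ_of_le (Nat.find_min' _ (pos_of_mul_pos_right hw (hm v w)))⟩
  choose g hg using hstep
  let f : X → X := fun v => if hv : v = r then r else g v hv
  have hf : ∀ v (hv : v ≠ r), f v = g v hv := fun v hv => dif_neg hv
  refine ⟨f, mem_arborescences.2 ⟨dif_pos rfl, fun v => ?_⟩, fun v hv => hf v hv ▸ (hg v hv).1⟩
  induction hn : Nat.find (hr v) using Nat.strong_induction_on generalizing v with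
  | _ n ih =>
    by_cases hv : v = r
    · exact ⟨0, hv⟩
    · obtain ⟨k, hk⟩ := ih _ (hn ▸ (hg v hv).2) (g v hv) rfl
      exact ⟨k + 1, by rw [iterate_succ_apply, hf v hv, hk]⟩

namespace Matrix.IsIrreducible

variable {m : Matrix X X ℝ}

lemma exists_pow_apply_pos (hm : m.IsIrreducible) (i j : X) : ∃ k, 0 < (m ^ k) i j :=
  ((isIrreducible_iff_exists_pow_pos hm.nonneg).1 hm i j).imp fun _ => And.right

lemma treeWeight_pos (hm : m.IsIrreducible) (r : X) : 0 < treeWeight m r := by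
  obtain ⟨f, hf, hpos⟩ :=
    exists_mem_arborescences_forall_pos hm.nonneg fun v => hm.exists_pow_apply_pos v r
  exact (prod_pos fun v hv => hpos v (ne_of_mem_erase hv)).trans_le
    (arborescenceWeight_le_treeWeight hm.nonneg hf)

lemma eq_zero_of_vecMul_eq_self (hm : m.IsIrreducible) {v : X → ℝ} (hv : 0 ≤ v)
    (hvm : v ᵥ* m = v) {j : X} (hj : v j = 0) : v = 0 := by
  have hpow : ∀ k, v ᵥ* m ^ k = v := fun k => by
    induction k with
    | zero => simp
    | succ k ih => rw [pow_succ, ← vecMul_vecMul, ih, hvm]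
  ext i
  obtain ⟨k, hk⟩ := hm.exists_pow_apply_pos i j
  have hsum : ∑ l, v l * (m ^ k) l j = 0 := (congrFun (hpow k) j).trans hj
  have hterm := (sum_eq_zero_iff_of_nonneg fun l _ =>
    mul_nonneg (hv l) (pow_apply_nonneg hm.nonneg k l j)).1 hsum i (mem_univ i)
  exact (mul_eq_zero.1 hterm).resolve_right hk.ne'

/-- Subtract the largest multiple of `q` lying below `p`: what is left is a stationary
nonnegative vector with a zero, hence zero. -/
theorem eq_of_vecMul_eq_self (hm : m.IsIrreducible) {p q : X → ℝ} (hp0 : 0 ≤ p) (hq0 : 0 ≤ q)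
    (hp1 : ∑ x, p x = 1) (hq1 : ∑ x, q x = 1) (hp : p ᵥ* m = p) (hq : q ᵥ* m = q) : p = q := by
  obtain ⟨j, hjq, hjmin⟩ := exists_min_image {x | 0 < q x} (fun x => p x / q x) <| by
    obtain ⟨x, -, hx⟩ := exists_ne_zero_of_sum_ne_zero (hq1.trans_ne one_ne_zero)
    exact ⟨x, mem_filter.2 ⟨mem_univ x, (hq0 x).lt_of_ne' hx⟩⟩
  replace hjq : 0 < q j := (mem_filter.1 hjq).2
  set c := p j / q j
  have hle : c • q ≤ p := fun x => by
    rcases (hq0 x).lt_or_eq with hx | hx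
    · exact (le_div_iff₀ hx).1 (hjmin x (mem_filter.2 ⟨mem_univ x, hx⟩))
    · simpa [← hx] using hp0 x
  have hpc : p = c • q := sub_eq_zero.1 <| hm.eq_zero_of_vecMul_eq_self (sub_nonneg.2 hle)
    (by rw [sub_vecMul, smul_vecMul, hp, hq]) (j := j) (by simp [c, hjq.ne'])
  have hc : c = 1 := by simpa [hpc, ← mul_sum, hq1] using hp1
  rw [hpc, hc, one_smul]

theorem eq_treeWeight_div (hm : m.IsIrreducible) (hrow : ∀ i, ∑ j, m i j = 1) {π : X → ℝ}
    (hπ0 : 0 ≤ π) (hπ1 : ∑ x, π x = 1) (hπ : π ᵥ* m = π) :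
    π = fun x => treeWeight m x / ∑ y, treeWeight m y := by
  obtain ⟨x, -, -⟩ := exists_ne_zero_of_sum_ne_zero (hπ1.trans_ne one_ne_zero)
  have hS : 0 < ∑ y, treeWeight m y :=
    sum_pos (fun y _ => hm.treeWeight_pos y) ⟨x, mem_univ x⟩
  refine hm.eq_of_vecMul_eq_self hπ0 (fun y => div_nonneg (treeWeight_nonneg hm.nonneg y) hS.le)
    hπ1 (by rw [← sum_div, div_self hS.ne']) hπ ?_
  rw [show (fun y => treeWeight m y / ∑ y, treeWeight m y) =
    (∑ y, treeWeight m y)⁻¹ • treeWeight m by ext; simp [div_eq_inv_mul],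
    smul_vecMul, treeWeight_vecMul m hrow]

end Matrix.IsIrreducible

end Arborescences

section Metropolis

open Real

variable [DecidableEq X] (F : X → ℝ)

def arborescenceCost (r : X) (f : X → X) : ℝ :=
  ∑ v ∈ univ.erase r, max (F (f v) - F v) 0

variable {F} {f : X → X} {y u : X}

lemma reroot_mem_arborescences (hf : f ∈ arborescences y) (u : X) :
    reroot f y u ∈ arborescences u := by
  refine update_mem_arborescences fun v => ?_
  obtain ⟨k, hk⟩ := exists_iterate_update_eq (mem_arborescences.1 hf).2 u v
  exact ⟨k + 1, by rw [iterate_succ_apply', hk, update_self]⟩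

lemma arborescenceCost_reroot (huy : u ≠ y) (hfu : f u = y) :
    arborescenceCost F u (reroot f y u) = arborescenceCost F y f + F u - F y := by
  have hy : y ∈ univ.erase u := mem_erase.2 ⟨huy.symm, mem_univ y⟩
  have hu : u ∈ univ.erase y := mem_erase.2 ⟨huy, mem_univ u⟩
  have hrest : ∑ v ∈ (univ.erase u).erase y, max (F (reroot f y u v) - F v) 0 =
      ∑ v ∈ (univ.erase y).erase u, max (F (f v) - F v) 0 := by
    rw [erase_right_comm]
    refine sum_congr rfl fun v hv => ?_
    simp only [mem_erase] at hv
    rw [reroot_apply_of_ne hv.1 hv.2.1]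
  have hry : reroot f y u y = u := by rw [reroot, update_of_ne huy.symm, update_self]
  rw [arborescenceCost, arborescenceCost, ← add_sum_erase _ _ hy, ← add_sum_erase _ _ hu, hrest,
    hry, hfu]
  have hmax := max_zero_sub_eq_self (F u - F y)
  rw [neg_sub] at hmax
  linarith

/-- Reroot step by step along the path from `z` to `y`, which reverses that path. -/
theorem exists_mem_arborescences_arborescenceCost_eq {E : Set (X × X)}
    (hE : ∀ a b, (a, b) ∈ E → (b, a) ∈ E) (hf : f ∈ arborescences y) (hfE : ∀ v ≠ y, (v, f v) ∈ E)
    (z : X) : ∃ g ∈ arborescences z, (∀ v ≠ z, (v, g v) ∈ E) ∧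
      arborescenceCost F z g = arborescenceCost F y f + F z - F y := by
  obtain ⟨d, hd⟩ := (mem_arborescences.1 hf).2 z
  induction d generalizing f y with
  | zero =>
    obtain rfl : z = y := hd
    exact ⟨f, hf, hfE, by ring⟩
  | succ d ih =>
    set u := f^[d] z
    have hfu : f u = y := by rwa [iterate_succ_apply'] at hd
    by_cases huy : u = y
    · exact ih hf hfE huy
    have hfy := (mem_arborescences.1 hf).1
    have hpath : (reroot f y u)^[d] z = u := by
      refine iterate_eq_of_forall_lt_notMem (s := {u, y})
        (fun v hv => reroot_apply_of_ne (fun h => hv (.inl h)) (fun h => hv (.inr h)))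
        fun j hj hmem => huy ?_
      have hj1 : f^[j + 1] z = y := by
        rw [iterate_succ_apply']
        rcases hmem with h | h <;> rw [h]
        exacts [hfu, hfy]
      calc u = f^[d - (j + 1) + (j + 1)] z := by rw [Nat.sub_add_cancel hj]
        _ = y := by rw [iterate_add_apply, hj1, iterate_fixed hfy]
    obtain ⟨g, hg, hgE, hcost⟩ := ih (reroot_mem_arborescences hf u)
      (reroot_apply_mem hE hfE huy hfu) hpath
    exact ⟨g, hg, hgE, by rw [hcost, arborescenceCost_reroot huy hfu]; ring⟩

lemma exp_neg_arborescenceCost_div (F : X → ℝ) (T : ℝ) (r : X) (f : X → X) :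
    exp (-arborescenceCost F r f / T) = ∏ v ∈ univ.erase r, exp (-max (F (f v) - F v) 0 / T) := by
  rw [← exp_sum, ← sum_div, sum_neg_distrib, arborescenceCost]

structure IsMetropolisKernel (m : Matrix X X ℝ) (E : Set (X × X)) (F : X → ℝ) (δ T : ℝ) :
    Prop where
  apply_le : ∀ i j, i ≠ j → m i j ≤ exp (-max (F j - F i) 0 / T)
  le_apply : ∀ i j, (i, j) ∈ E → δ * exp (-max (F j - F i) 0 / T) ≤ m i j
  mem_of_apply_pos : ∀ i j, i ≠ j → 0 < m i j → (i, j) ∈ E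

namespace IsMetropolisKernel

variable {m : Matrix X X ℝ} {E : Set (X × X)} {δ T : ℝ} {r : X}

lemma arborescenceWeight_le (hm : IsMetropolisKernel m E F δ T) (hm0 : ∀ i j, 0 ≤ m i j)
    (hf : f ∈ arborescences r) : arborescenceWeight m r f ≤ exp (-arborescenceCost F r f / T) := by
  rw [exp_neg_arborescenceCost_div]
  exact prod_le_prod (fun v _ => hm0 v (f v)) fun v hv =>
    hm.apply_le v (f v) (apply_ne_self_of_mem_arborescences hf (ne_of_mem_erase hv)).symm

lemma pow_mul_exp_le_arborescenceWeight (hm : IsMetropolisKernel m E F δ T) (hδ : 0 ≤ δ)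
    (hfE : ∀ v ≠ r, (v, f v) ∈ E) :
    δ ^ (Fintype.card X - 1) * exp (-arborescenceCost F r f / T) ≤ arborescenceWeight m r f := by
  rw [exp_neg_arborescenceCost_div, ← card_univ, ← card_erase_of_mem (mem_univ r), ← prod_const,
    ← prod_mul_distrib]
  exact prod_le_prod (fun v _ => by positivity) fun v hv =>
    hm.le_apply v (f v) (hfE v (ne_of_mem_erase hv))

lemma mem_of_arborescenceWeight_ne_zero (hm : IsMetropolisKernel m E F δ T)
    (hm0 : ∀ i j, 0 ≤ m i j) (hf : f ∈ arborescences r) (hw : arborescenceWeight m r f ≠ 0) :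
    ∀ v ≠ r, (v, f v) ∈ E := fun v hv =>
  hm.mem_of_apply_pos v (f v) (apply_ne_self_of_mem_arborescences hf hv).symm <|
    (hm0 v (f v)).lt_of_ne' (prod_ne_zero_iff.1 hw v (mem_erase.2 ⟨hv, mem_univ v⟩))

/-- A heaviest arborescence rooted at `y` carries at least the share `1 / card (X → X)` of
`treeWeight m y`; compare it with its rerooting at `z`. -/
theorem mul_treeWeight_le (hm : IsMetropolisKernel m E F δ T) (hm0 : ∀ i j, 0 ≤ m i j)
    (hδ : 0 ≤ δ) (hE : ∀ a b, (a, b) ∈ E → (b, a) ∈ E) (y z : X) :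
    δ ^ (Fintype.card X - 1) / Fintype.card (X → X) * exp ((F y - F z) / T) * treeWeight m y ≤
      treeWeight m z := by
  set N : ℝ := (Fintype.card (X → X) : ℝ)
  have hN : 0 < N := by have : Nonempty X := ⟨y⟩; positivity
  rcases (arborescences y).eq_empty_or_nonempty with hempty | hne
  · simpa [treeWeight, hempty] using treeWeight_nonneg hm0 z
  obtain ⟨f, hf, hfmax⟩ := exists_max_image _ (arborescenceWeight m y) hne
  have hτy : treeWeight m y ≤ N * arborescenceWeight m y f := by
    refine (sum_le_card_nsmul _ _ _ hfmax).trans ?_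
    rw [nsmul_eq_mul]
    gcongr
    · exact arborescenceWeight_nonneg hm0 y f
    · exact Nat.cast_le.2 (card_le_univ _)
  rcases (arborescenceWeight_nonneg hm0 y f).eq_or_lt with h0 | hpos
  · have : treeWeight m y ≤ 0 := by simpa [← h0] using hτy
    exact (mul_nonpos_of_nonneg_of_nonpos (by positivity) this).trans (treeWeight_nonneg hm0 z)
  obtain ⟨g, hg, hgE, hcost⟩ := exists_mem_arborescences_arborescenceCost_eq (F := F) hE hf
    (hm.mem_of_arborescenceWeight_ne_zero hm0 hf hpos.ne') z
  calc δ ^ (Fintype.card X - 1) / N * exp ((F y - F z) / T) * treeWeight m y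
      ≤ δ ^ (Fintype.card X - 1) / N * exp ((F y - F z) / T) * (N * arborescenceWeight m y f) := by
        gcongr
    _ = δ ^ (Fintype.card X - 1) * (exp ((F y - F z) / T) * arborescenceWeight m y f) := by
        field_simp
    _ ≤ δ ^ (Fintype.card X - 1) * (exp ((F y - F z) / T) *
          exp (-arborescenceCost F y f / T)) := by
        gcongr
        exact hm.arborescenceWeight_le hm0 hf
    _ = δ ^ (Fintype.card X - 1) * exp (-arborescenceCost F z g / T) := by
        rw [← exp_add, hcost]
        ring_nf
    _ ≤ treeWeight m z :=
        (hm.pow_mul_exp_le_arborescenceWeight hδ hgE).trans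
          (arborescenceWeight_le_treeWeight hm0 hg)

theorem mul_le_of_vecMul_eq_self (hm : IsMetropolisKernel m E F δ T) (hirr : m.IsIrreducible)
    (hrow : ∀ i, ∑ j, m i j = 1) (hδ : 0 ≤ δ)
    (hE : ∀ a b, (a, b) ∈ E → (b, a) ∈ E) {p : X → ℝ} (hp0 : 0 ≤ p) (hp1 : ∑ x, p x = 1)
    (hp : p ᵥ* m = p) (y z : X) :
    δ ^ (Fintype.card X - 1) / Fintype.card (X → X) * exp ((F y - F z) / T) * p y ≤ p z := by
  rw [hirr.eq_treeWeight_div hrow hp0 hp1 hp, ← mul_div_assoc]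
  exact div_le_div_of_nonneg_right (hm.mul_treeWeight_le hirr.nonneg hδ hE y z)
    (sum_nonneg fun x _ => treeWeight_nonneg hirr.nonneg x)

end IsMetropolisKernel

end Metropolis

section Generation

open Real

variable [DecidableEq X] {A M : Matrix X X ℝ} {F : X → ℝ} {T : ℝ}

lemma metropolis_acceptance_eq {α : Type*} (F : α → ℝ) (T : ℝ) (i j : α) :
    (if F j < F i then 1 else exp (-(F j - F i) / T)) = exp (-max (F j - F i) 0 / T) := by
  split_ifs with h
  · rw [max_eq_right (sub_neg.2 h).le, neg_zero, zero_div, exp_zero]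
  · rw [max_eq_left (sub_nonneg.2 (not_lt.1 h))]

lemma mem_rowStochastic_of_generation (hT : 0 ≤ T) (hA : A ∈ rowStochastic ℝ X)
    (hM_off : ∀ i j, i ≠ j → M i j = A i j * exp (-max (F j - F i) 0 / T))
    (hM_diag : ∀ i, M i i = 1 - ∑ j ∈ univ.erase i, M i j) : M ∈ rowStochastic ℝ X := by
  have hacc : ∀ i j, exp (-max (F j - F i) 0 / T) ≤ 1 := fun i j =>
    exp_le_one_iff.2 (div_nonpos_of_nonpos_of_nonneg (neg_nonpos.2 (le_max_right _ _)) hT)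
  have hoff : ∀ i, ∀ j ∈ univ.erase i, 0 ≤ M i j ∧ M i j ≤ A i j := fun i j hj => by
    rw [hM_off i j (ne_of_mem_erase hj).symm]
    have hAij := nonneg_of_mem_rowStochastic hA (i := i) (j := j)
    exact ⟨by positivity, mul_le_of_le_one_right hAij (hacc i j)⟩
  refine mem_rowStochastic_iff_sum.2 ⟨fun i j => ?_, fun i => ?_⟩
  · rcases eq_or_ne i j with rfl | hij
    · have hsum : ∑ j ∈ univ.erase i, M i j ≤ 1 - A i i := by
        rw [← sum_row_of_mem_rowStochastic hA i, ← add_sum_erase _ _ (mem_univ i),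
          add_sub_cancel_left]
        exact sum_le_sum fun j hj => (hoff i j hj).2
      rw [hM_diag i]
      linarith [nonneg_of_mem_rowStochastic hA (i := i) (j := i)]
    · exact (hoff i j (mem_erase.2 ⟨hij.symm, mem_univ j⟩)).1
  · rw [← add_sum_erase _ _ (mem_univ i), hM_diag i, sub_add_cancel]

lemma isMetropolisKernel_of_generation {E : Set (X × X)} {δ : ℝ}
    (hA : A ∈ rowStochastic ℝ X)
    (hM_off : ∀ i j, i ≠ j → M i j = A i j * exp (-max (F j - F i) 0 / T))
    (hδ : ∀ i j, i ≠ j → 0 < A i j → δ ≤ A i j) (hE : ∀ i j, (i, j) ∈ E ↔ i ≠ j ∧ 0 < A i j) :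
    IsMetropolisKernel M E F δ T where
  apply_le i j hij := by
    rw [hM_off i j hij]
    exact mul_le_of_le_one_left (exp_pos _).le (le_one_of_mem_rowStochastic hA)
  le_apply i j hij := by
    obtain ⟨hne, hpos⟩ := (hE i j).1 hij
    rw [hM_off i j hne]
    exact mul_le_mul_of_nonneg_right (hδ i j hne hpos) (exp_pos _).le
  mem_of_apply_pos i j hij hpos := by
    rw [hM_off i j hij] at hpos
    exact (hE i j).2 ⟨hij, pos_of_mul_pos_left hpos (exp_pos _).le⟩

end Generation

section ZeroTemperature

open Real

lemma tendsto_nhds_zero_of_mul_exp_div_le_one {g : ℝ → ℝ} {a c : ℝ} (ha : 0 < a) (hc : 0 < c)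
    (hg0 : ∀ T, 0 < T → 0 ≤ g T) (hg : ∀ T, 0 < T → c * exp (a / T) * g T ≤ 1) :
    Tendsto g (𝓝[>] 0) (𝓝 0) := by
  have hexp : Tendsto (fun T => (c * exp (a / T))⁻¹) (𝓝[>] 0) (𝓝 0) := by
    simpa [mul_inv, ← exp_neg, div_eq_mul_inv, mul_comm] using
      (tendsto_exp_atBot.comp (tendsto_neg_atTop_atBot.comp
        (tendsto_inv_nhdsGT_zero.const_mul_atTop ha))).const_mul c⁻¹
  refine tendsto_of_tendsto_of_tendsto_of_le_of_le' tendsto_const_nhds hexp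
    (eventually_nhdsWithin_of_forall hg0) (eventually_nhdsWithin_of_forall fun T hT => ?_)
  rw [← one_div, le_div_iff₀' (by positivity)]
  exact hg T hT

lemma div_card_le_apply_of_forall_le {F p : X → ℝ} {c T : ℝ} {x : X} (hc : 0 ≤ c) (hT : 0 ≤ T)
    (hp0 : 0 ≤ p) (hp1 : ∑ z, p z = 1) (hx : ∀ z, F x ≤ F z)
    (hcmp : ∀ z, c * exp ((F z - F x) / T) * p z ≤ p x) : c / Fintype.card X ≤ p x := by
  have hle : ∀ z, c * p z ≤ p x := fun z =>
    (mul_le_mul_of_nonneg_right (le_mul_of_one_le_right hc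
      (one_le_exp (div_nonneg (sub_nonneg.2 (hx z)) hT))) (hp0 z)).trans (hcmp z)
  rw [div_le_iff₀' (Nat.cast_pos.2 (Fintype.card_pos_iff.2 ⟨x⟩))]
  calc c = ∑ z, c * p z := by rw [← mul_sum, hp1, mul_one]
    _ ≤ ∑ _z : X, p x := sum_le_sum fun z _ => hle z
    _ = Fintype.card X * p x := by rw [sum_const, card_univ, nsmul_eq_mul]

/-- A state that is not a minimum receives mass at most `c⁻¹ * exp (-(F x - F y) / T)`, and a
minimum at least `c / card X`. -/
theorem pos_iff_forall_le_of_tendsto {F : X → ℝ} {p : ℝ → X → ℝ} {plim : X → ℝ} {c : ℝ}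
    (hc : 0 < c) (hp0 : ∀ T, 0 < T → 0 ≤ p T) (hp1 : ∀ T, 0 < T → ∑ x, p T x = 1)
    (hcmp : ∀ T, 0 < T → ∀ y z, c * exp ((F y - F z) / T) * p T y ≤ p T z)
    (hlim : Tendsto p (𝓝[>] 0) (𝓝 plim)) (x : X) : 0 < plim x ↔ ∀ y, F x ≤ F y := by
  have hlimx : Tendsto (fun T => p T x) (𝓝[>] 0) (𝓝 (plim x)) := tendsto_pi_nhds.1 hlim x
  constructor
  · intro hpos y
    by_contra! hy
    refine hpos.ne' (tendsto_nhds_unique hlimx (tendsto_nhds_zero_of_mul_exp_div_le_one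
      (sub_pos.2 hy) hc (fun T hT => hp0 T hT x) fun T hT => ?_))
    calc c * exp ((F x - F y) / T) * p T x ≤ p T y := hcmp T hT x y
      _ ≤ ∑ z, p T z := single_le_sum (fun z _ => hp0 T hT z) (mem_univ y)
      _ = 1 := hp1 T hT
  · intro hmin
    have hbound : c / Fintype.card X ≤ plim x :=
      ge_of_tendsto hlimx <| eventually_nhdsWithin_of_forall fun T hT =>
        div_card_le_apply_of_forall_le hc.le hT.le (hp0 T hT) (hp1 T hT) hmin
          fun z => hcmp T hT z x
    exact (div_pos hc (Nat.cast_pos.2 (Fintype.card_pos_iff.2 ⟨x⟩))).trans_le hbound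

end ZeroTemperature

end

theorem generalized_simulated_annealing_convergence_general
    {X : Type*} [Fintype X] [DecidableEq X]
    (F : X → ℝ)
    -- the generation matrices `A(T)` are row-stochastic for every `T > 0`
    (A : ℝ → Matrix X X ℝ)
    (hA_nonneg : ∀ T, 0 < T → ∀ i j, 0 ≤ A T i j)
    (hA_rowsum : ∀ T, 0 < T → ∀ i, ∑ j, A T i j = 1)
    -- the acceptance probabilities
    (P : ℝ → X → X → ℝ)
    (hP : ∀ T, 0 < T → ∀ i j, P T i j =
      if F j < F i then 1 else Real.exp (-(F j - F i) / T))
    -- the transition matrices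
    (M : ℝ → Matrix X X ℝ)
    (hM_off : ∀ T, 0 < T → ∀ i j, i ≠ j → M T i j = A T i j * P T i j)
    (hM_diag : ∀ T, 0 < T → ∀ i,
      M T i i = 1 - ∑ j ∈ Finset.univ.erase i, M T i j)
    -- (a) irreducibility: every state is accessible from every state
    (hirr : ∀ T, 0 < T → ∀ i j, ∃ k : ℕ, 1 ≤ k ∧ 0 < (M T ^ k) i j)
    -- (a) `π_T` is a stationary probability distribution of `M(T)`
    (pi : ℝ → X → ℝ)
    (hpi_nonneg : ∀ T, 0 < T → ∀ x, 0 ≤ pi T x)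
    (hpi_sum : ∀ T, 0 < T → ∑ x, pi T x = 1)
    (hpi_stat : ∀ T, 0 < T → ∀ j, ∑ i, pi T i * M T i j = pi T j)
    -- (b) the zero-temperature limit `π*` of `π_T` exists
    (pistar : X → ℝ)
    (hlim : Tendsto pi (nhdsWithin 0 (Set.Ioi 0)) (nhds pistar))
    -- (i) uniform positivity of the generation probabilities
    (hdelta : ∃ δ : ℝ, 0 < δ ∧
      ∀ T, 0 < T → ∀ i j, i ≠ j → 0 < A T i j → δ ≤ A T i j)
    -- (ii) the neighborhood graph does not depend on `T`
    (E : Set (X × X))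
    (hE : ∀ T, 0 < T → ∀ i j : X, (i, j) ∈ E ↔ i ≠ j ∧ 0 < A T i j)
    -- (iii) the neighborhood graph is weakly reversible
    (hrev : ∀ Ftil : ℝ, ∀ x y : X,
      ExistsPathBelow E F Ftil x y ↔ ExistsPathBelow E F Ftil y x) :
    ∀ x : X, 0 < pistar x ↔ ∀ y : X, F x ≤ F y := by
  obtain ⟨δ, hδ, hδA⟩ := hdelta
  intro x
  have : Nonempty X := ⟨x⟩
  obtain ⟨x₀, -, hx₀⟩ := exists_min_image univ F ⟨x, mem_univ x⟩
  have hF : ∀ v, F x₀ - 1 < F v := fun v => by linarith [hx₀ v (mem_univ v)]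
  have hEsymm : ∀ a b, (a, b) ∈ E → (b, a) ∈ E := fun a b hab =>
    (existsPathBelow_iff_mem hF).1 ((hrev _ a b).1 ((existsPathBelow_iff_mem hF).2 hab))
  refine pos_iff_forall_le_of_tendsto (c := δ ^ (Fintype.card X - 1) / Fintype.card (X → X))
    (by positivity) hpi_nonneg hpi_sum (fun T hT => ?_) hlim x
  have hA : A T ∈ rowStochastic ℝ X :=
    mem_rowStochastic_iff_sum.2 ⟨hA_nonneg T hT, hA_rowsum T hT⟩
  have hM_off_exp : ∀ i j, i ≠ j → M T i j = A T i j * Real.exp (-max (F j - F i) 0 / T) :=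
    fun i j hij => by rw [hM_off T hT i j hij, hP T hT, metropolis_acceptance_eq]
  have hM := mem_rowStochastic_of_generation hT.le hA hM_off_exp (hM_diag T hT)
  have hMetropolis := isMetropolisKernel_of_generation hA hM_off_exp (hδA T hT) (hE T hT)
  exact hMetropolis.mul_le_of_vecMul_eq_self
      ((isIrreducible_iff_exists_pow_pos hM.1).2 (hirr T hT)) (sum_row_of_mem_rowStochastic hM)
      hδ.le hEsymm (hpi_nonneg T hT) (hpi_sum T hT) (funext (hpi_stat T hT))

/-- Convergence of generalized simulated annealing with temperature-dependent
generation matrices `A(T)`, Metropolis acceptance probabilities `P(T)` for the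
objective `F`, transition matrices `M(T)`, stationary distributions `π_T` with
zero-temperature limit `π*`: under the uniform positivity (i), temperature
independence of the neighborhood graph (ii) and its weak reversibility (iii),
`π*(x) > 0` iff `x` is a global minimum of `F`. -/
theorem generalized_simulated_annealing_convergence
    {X : Type*} [Fintype X] [DecidableEq X] [Nonempty X]
    (F : X → ℝ)
    -- the generation matrices `A(T)` are row-stochastic for every `T > 0`
    (A : ℝ → Matrix X X ℝ)
    (hA_nonneg : ∀ T, 0 < T → ∀ i j, 0 ≤ A T i j)
    (hA_rowsum : ∀ T, 0 < T → ∀ i, ∑ j, A T i j = 1)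
    -- the acceptance probabilities
    (P : ℝ → X → X → ℝ)
    (hP : ∀ T, 0 < T → ∀ i j, P T i j =
      if F j < F i then 1 else Real.exp (-(F j - F i) / T))
    -- the transition matrices
    (M : ℝ → Matrix X X ℝ)
    (hM_off : ∀ T, 0 < T → ∀ i j, i ≠ j → M T i j = A T i j * P T i j)
    (hM_diag : ∀ T, 0 < T → ∀ i,
      M T i i = 1 - ∑ j ∈ Finset.univ.erase i, M T i j)
    -- (a) irreducibility: every state is accessible from every state
    (hirr : ∀ T, 0 < T → ∀ i j, ∃ k : ℕ, 1 ≤ k ∧ 0 < (M T ^ k) i j)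
    -- (a) aperiodicity: the gcd of the return times of every state is 1
    (haper : ∀ T, 0 < T → ∀ i, ∀ d : ℕ,
      (∀ k : ℕ, 1 ≤ k → 0 < (M T ^ k) i i → d ∣ k) → d = 1)
    -- (a) `π_T` is a stationary probability distribution of `M(T)`
    (pi : ℝ → X → ℝ)
    (hpi_nonneg : ∀ T, 0 < T → ∀ x, 0 ≤ pi T x)
    (hpi_sum : ∀ T, 0 < T → ∑ x, pi T x = 1)
    (hpi_stat : ∀ T, 0 < T → ∀ j, ∑ i, pi T i * M T i j = pi T j)
    -- (b) the zero-temperature limit `π*` of `π_T` exists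
    (pistar : X → ℝ)
    (hlim : Tendsto pi (nhdsWithin 0 (Set.Ioi 0)) (nhds pistar))
    -- (i) uniform positivity of the generation probabilities
    (hdelta : ∃ δ : ℝ, 0 < δ ∧
      ∀ T, 0 < T → ∀ i j, i ≠ j → 0 < A T i j → δ ≤ A T i j)
    -- (ii) the neighborhood graph does not depend on `T`
    (E : Set (X × X))
    (hE : ∀ T, 0 < T → ∀ i j : X, (i, j) ∈ E ↔ i ≠ j ∧ 0 < A T i j)
    -- (iii) the neighborhood graph is weakly reversible
    (hrev : ∀ Ftil : ℝ, ∀ x y : X,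
      ExistsPathBelow E F Ftil x y ↔ ExistsPathBelow E F Ftil y x) :
    ∀ x : X, 0 < pistar x ↔ ∀ y : X, F x ≤ F y :=
  generalized_simulated_annealing_convergence_general F A hA_nonneg hA_rowsum P hP M hM_off hM_diag
    hirr pi hpi_nonneg hpi_sum hpi_stat pistar hlim hdelta E hE hrev
end

section
/- Let n ≥ 1 and z_b ∈ {−1,1}^n. Define the energy E(z) = Σ_{i=1}^n z_{b,i} z_i + Σ_{1 ≤ i < j ≤ n} z_{b,i} z_{b,j} z_i z_j for z ∈ {−1,1}^n. Then E attains its maximum over {−1,1}^n uniquely at z = z_b, where E(z_b) = n + n(n−1)/2; that is, E(z) < n + n(n−1)/2 for every z ∈ {−1,1}^n with z ≠ z_b. -/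
/-! With `w i = zb i * z i ∈ {±1}` and overlap `S = ∑ i, w i`, the pair sum of the energy is
`(S ^ 2 - n) / 2`, and `S = n - 2 d` where `d` is the Hamming distance from `z` to `zb`. Hence
`E z = E zb - 2 d (n + 1 - d)`, and the correction is strictly negative as soon as `0 < d ≤ n`. -/

open Finset

theorem Finset.two_mul_sum_sum_Ioi_mul_add_sum_sq {ι R : Type*} [CommRing R] [LinearOrder ι]
    [Fintype ι] [LocallyFiniteOrderTop ι] [LocallyFiniteOrderBot ι] (w : ι → R) :
    2 * ∑ i, ∑ j ∈ Ioi i, w i * w j + ∑ i, w i ^ 2 = (∑ i, w i) ^ 2 := by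
  have off_diag : 2 * ∑ i, ∑ j ∈ Ioi i, w i * w j = ∑ i, ∑ j ∈ {i}ᶜ, w i * w j := by
    rw [← sum_sum_Ioi_add_eq_sum_sum_off_diag fun j i ↦ w i * w j]
    simp only [mul_sum, mul_comm (w _) (w _), two_mul]
  rw [off_diag, sq, Fintype.sum_mul_sum, ← sum_add_distrib]
  refine sum_congr rfl fun i _ ↦ ?_
  rw [← add_sum_erase _ _ (mem_univ i), compl_eq_univ_sdiff, sdiff_singleton_eq_erase]
  ring

lemma mul_eq_one_sub_two_mul_ite_ne {x y : ℝ} (hx : x = 1 ∨ x = -1) (hy : y = 1 ∨ y = -1) :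
    x * y = 1 - 2 * if x ≠ y then 1 else 0 := by
  rcases hx with rfl | rfl <;> rcases hy with rfl | rfl <;> norm_num

section Spins

variable {ι : Type*} [Fintype ι] {a b : ι → ℝ}

lemma sum_mul_eq_card_sub_two_mul_hammingDist (ha : ∀ i, a i = 1 ∨ a i = -1)
    (hb : ∀ i, b i = 1 ∨ b i = -1) :
    ∑ i, a i * b i = Fintype.card ι - 2 * hammingDist a b := by
  simp only [fun i ↦ mul_eq_one_sub_two_mul_ite_ne (ha i) (hb i), sum_sub_distrib, ← mul_sum,
    sum_boole, sum_const, card_univ, nsmul_eq_mul, mul_one, hammingDist]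

variable [LinearOrder ι] [LocallyFiniteOrderTop ι] [LocallyFiniteOrderBot ι]

def tabuEnergy (zb z : ι → ℝ) : ℝ :=
  ∑ i, zb i * z i + ∑ i, ∑ j ∈ Ioi i, zb i * zb j * (z i * z j)

lemma tabuEnergy_eq (ha : ∀ i, a i = 1 ∨ a i = -1) (hb : ∀ i, b i = 1 ∨ b i = -1) :
    tabuEnergy a b = Fintype.card ι + Fintype.card ι * (Fintype.card ι - 1) / 2
      - 2 * hammingDist a b * (Fintype.card ι + 1 - hammingDist a b) := by
  have sum_sq : ∑ i, (a i * b i) ^ 2 = Fintype.card ι := by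
    simp [mul_pow, fun i ↦ sq_eq_one_iff.2 (ha i), fun i ↦ sq_eq_one_iff.2 (hb i)]
  have pair_sum := two_mul_sum_sum_Ioi_mul_add_sum_sq fun i ↦ a i * b i
  rw [sum_sq, sum_mul_eq_card_sub_two_mul_hammingDist ha hb] at pair_sum
  rw [tabuEnergy, sum_mul_eq_card_sub_two_mul_hammingDist ha hb]
  simp only [mul_mul_mul_comm (a _) (a _)]
  linear_combination (1 / 2) * pair_sum

end Spins

theorem tabu_single_candidate_unique_max_general (n : ℕ)
    (zb : Fin n → ℝ) (hzb : ∀ i, zb i = 1 ∨ zb i = -1) :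
    ((∑ i, zb i * zb i) +
        (∑ i, ∑ j ∈ Finset.Ioi i, zb i * zb j * (zb i * zb j)) =
      (n : ℝ) + (n : ℝ) * ((n : ℝ) - 1) / 2) ∧
    (∀ z : Fin n → ℝ, (∀ i, z i = 1 ∨ z i = -1) → z ≠ zb →
      (∑ i, zb i * z i) +
          (∑ i, ∑ j ∈ Finset.Ioi i, zb i * zb j * (z i * z j)) <
        (n : ℝ) + (n : ℝ) * ((n : ℝ) - 1) / 2) := by
  have energy (z : Fin n → ℝ) (hz : ∀ i, z i = 1 ∨ z i = -1) := tabuEnergy_eq hzb hz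
  simp only [tabuEnergy, Fintype.card_fin] at energy
  refine ⟨by simpa using energy zb hzb, fun z hz hne ↦ ?_⟩
  have hd : 1 ≤ hammingDist zb z := hammingDist_pos.2 hne.symm
  have hdn : hammingDist zb z ≤ n := hammingDist_le_card_fintype.trans_eq (Fintype.card_fin n)
  rw [energy z hz]
  nlinarith [(Nat.one_le_cast.2 hd : (1 : ℝ) ≤ _), (Nat.cast_le.2 hdn : (_ : ℝ) ≤ n)]

/-- With single-candidate tabu weights `θ_i = z_{b,i}`, `θ_ij = z_{b,i} z_{b,j}`,
the Ising energy `E(z) = Σ_i z_{b,i} z_i + Σ_{i<j} z_{b,i} z_{b,j} z_i z_j` attains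
its maximum over `{−1,1}^n` uniquely at `z = z_b`, where `E(z_b) = n + n(n−1)/2`. -/
theorem tabu_single_candidate_unique_max (n : ℕ) (hn : 1 ≤ n)
    (zb : Fin n → ℝ) (hzb : ∀ i, zb i = 1 ∨ zb i = -1) :
    ((∑ i, zb i * zb i) +
        (∑ i, ∑ j ∈ Finset.Ioi i, zb i * zb j * (zb i * zb j)) =
      (n : ℝ) + (n : ℝ) * ((n : ℝ) - 1) / 2) ∧
    (∀ z : Fin n → ℝ, (∀ i, z i = 1 ∨ z i = -1) → z ≠ zb →
      (∑ i, zb i * z i) +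
          (∑ i, ∑ j ∈ Finset.Ioi i, zb i * zb j * (z i * z j)) <
        (n : ℝ) + (n : ℝ) * ((n : ℝ) - 1) / 2) :=
  tabu_single_candidate_unique_max_general n zb hzb
end
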